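/- Matrix Lagrangian dual transform: for Hermitian positive semidefinite n×n matrices Q and Γ, log det(I+Q) ≥ log det(I+Γ) + n − Tr((I+Γ)(I+Q)^{-1}), with equality if and only if Q = Γ. -/

import Mathlib

/-!
Put `A = 1 + Q`, `B = 1 + Γ` and `M = A^{-1/2} B A^{-1/2}`, which is positive definite with
`log det M = log det B - log det A` and `tr M = tr (B A⁻¹)`. The inequality is then
`∑ log λᵢ ≤ ∑ (λᵢ - 1)` over the eigenvalues of `M`, i.e. `log x ≤ x - 1` summed, with equality
iff every `λᵢ = 1`, i.e. `M = 1`, i.e. `B = A`.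
-/

open Matrix ComplexOrder

namespace Matrix

variable {n 𝕜 : Type*} [Fintype n] [DecidableEq n] [RCLike 𝕜] {A B : Matrix n n 𝕜}

lemma IsHermitian.re_det (hA : A.IsHermitian) : RCLike.re A.det = ∏ i, hA.eigenvalues i := by
  rw [hA.det_eq_prod_eigenvalues, ← RCLike.ofReal_prod, RCLike.ofReal_re]

lemma IsHermitian.ofReal_re_det (hA : A.IsHermitian) : (RCLike.re A.det : 𝕜) = A.det := by
  rw [hA.re_det, hA.det_eq_prod_eigenvalues, RCLike.ofReal_prod]

lemma IsHermitian.re_trace_sub_card (hA : A.IsHermitian) :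
    RCLike.re A.trace - Fintype.card n = ∑ i, (hA.eigenvalues i - 1) := by
  rw [hA.trace_eq_sum_eigenvalues, ← RCLike.ofReal_sum, RCLike.ofReal_re, Finset.sum_sub_distrib]
  simp

lemma IsHermitian.eq_one_of_eigenvalues_eq_one (hA : A.IsHermitian)
    (h : ∀ i, hA.eigenvalues i = 1) : A = 1 := by
  rw [hA.spectral_theorem, show hA.eigenvalues = 1 from funext h]
  simp

lemma PosDef.re_det_pos (hA : A.PosDef) : 0 < RCLike.re A.det := by
  rw [hA.1.re_det]
  exact Finset.prod_pos fun i _ ↦ hA.eigenvalues_pos i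

lemma PosDef.log_re_det_eq_sum_log_eigenvalues (hA : A.PosDef) :
    Real.log (RCLike.re A.det) = ∑ i, Real.log (hA.1.eigenvalues i) := by
  rw [hA.1.re_det, Real.log_prod fun i _ ↦ (hA.eigenvalues_pos i).ne']

lemma PosDef.log_re_det_le_re_trace_sub_card (hA : A.PosDef) :
    Real.log (RCLike.re A.det) ≤ RCLike.re A.trace - Fintype.card n := by
  rw [hA.log_re_det_eq_sum_log_eigenvalues, hA.1.re_trace_sub_card]
  exact Finset.sum_le_sum fun i _ ↦ Real.log_le_sub_one_of_pos (hA.eigenvalues_pos i)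

lemma PosDef.log_re_det_eq_re_trace_sub_card_iff (hA : A.PosDef) :
    Real.log (RCLike.re A.det) = RCLike.re A.trace - Fintype.card n ↔ A = 1 := by
  refine ⟨fun h ↦ hA.1.eq_one_of_eigenvalues_eq_one fun i ↦ ?_, fun h ↦ by simp [h]⟩
  rw [hA.log_re_det_eq_sum_log_eigenvalues, hA.1.re_trace_sub_card] at h
  have hle i (_ : i ∈ Finset.univ) := Real.log_le_sub_one_of_pos (hA.eigenvalues_pos i)
  by_contra hne
  exact (Real.log_lt_sub_one_of_pos (hA.eigenvalues_pos i) hne).ne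
    ((Finset.sum_eq_sum_iff_of_le hle).mp h i (Finset.mem_univ i))

section sqrtInvConj

open scoped MatrixOrder

noncomputable def sqrtInvConj (A B : Matrix n n 𝕜) : Matrix n n 𝕜 :=
  CFC.sqrt A⁻¹ * B * CFC.sqrt A⁻¹

variable (hA : A.PosDef)
include hA

lemma PosDef.isUnit_det : IsUnit A.det :=
  (isUnit_iff_isUnit_det A).1 hA.isUnit

lemma PosDef.isUnit_sqrt_inv : IsUnit (CFC.sqrt A⁻¹) :=
  (CFC.isUnit_sqrt_iff _ hA.inv.posSemidef.nonneg).2 hA.inv.isUnit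

lemma PosDef.sqrt_inv_mul_self : CFC.sqrt A⁻¹ * CFC.sqrt A⁻¹ = A⁻¹ :=
  CFC.sqrt_mul_sqrt_self _ hA.inv.posSemidef.nonneg

lemma PosDef.sqrtInvConj (hB : B.PosDef) : (sqrtInvConj A B).PosDef := by
  have h := hA.isUnit_sqrt_inv.posDef_star_left_conjugate_iff.2 hB
  rwa [(CFC.sqrt_nonneg A⁻¹).isSelfAdjoint.star_eq] at h

lemma trace_sqrtInvConj : (sqrtInvConj A B).trace = (B * A⁻¹).trace := by
  rw [sqrtInvConj, trace_mul_cycle, hA.sqrt_inv_mul_self, trace_mul_comm]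

lemma det_sqrtInvConj_mul_det : (sqrtInvConj A B).det * A.det = B.det := by
  have h : (CFC.sqrt A⁻¹).det * (CFC.sqrt A⁻¹).det * A.det = 1 := by
    rw [← det_mul, hA.sqrt_inv_mul_self, det_nonsing_inv_mul_det _ hA.isUnit_det]
  rw [sqrtInvConj, det_mul, det_mul]
  linear_combination B.det * h

lemma log_re_det_sqrtInvConj (hB : B.PosDef) :
    Real.log (RCLike.re (sqrtInvConj A B).det) =
      Real.log (RCLike.re B.det) - Real.log (RCLike.re A.det) := by
  have hM := hA.sqrtInvConj hB
  have h : RCLike.re (sqrtInvConj A B).det * RCLike.re A.det = RCLike.re B.det := by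
    apply RCLike.ofReal_injective (K := 𝕜)
    rw [RCLike.ofReal_mul, hM.1.ofReal_re_det, hA.1.ofReal_re_det, hB.1.ofReal_re_det,
      det_sqrtInvConj_mul_det hA]
  rw [← h, Real.log_mul hM.re_det_pos.ne' hA.re_det_pos.ne', add_sub_cancel_right]

lemma sqrtInvConj_eq_one_iff : sqrtInvConj A B = 1 ↔ B = A := by
  have hS := hA.isUnit_sqrt_inv
  have hSAS : sqrtInvConj A A = 1 := hS.mul_left_inj.1 <| by
    rw [sqrtInvConj, one_mul, mul_assoc, mul_assoc, hA.sqrt_inv_mul_self,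
      mul_nonsing_inv _ hA.isUnit_det, mul_one]
  rw [← hSAS, sqrtInvConj, sqrtInvConj, hS.mul_left_inj, hS.mul_right_inj]

end sqrtInvConj

theorem PosDef.log_re_det_add_card_sub_re_trace_mul_inv_le (hA : A.PosDef) (hB : B.PosDef) :
    Real.log (RCLike.re B.det) + Fintype.card n - RCLike.re (B * A⁻¹).trace ≤
      Real.log (RCLike.re A.det) := by
  have h := (hA.sqrtInvConj hB).log_re_det_le_re_trace_sub_card
  rw [log_re_det_sqrtInvConj hA hB, trace_sqrtInvConj hA] at h
  linarith

theorem PosDef.log_re_det_add_card_sub_re_trace_mul_inv_eq_iff (hA : A.PosDef) (hB : B.PosDef) :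
    Real.log (RCLike.re B.det) + Fintype.card n - RCLike.re (B * A⁻¹).trace =
      Real.log (RCLike.re A.det) ↔ B = A := by
  rw [← sqrtInvConj_eq_one_iff hA, ← (hA.sqrtInvConj hB).log_re_det_eq_re_trace_sub_card_iff,
    log_re_det_sqrtInvConj hA hB, trace_sqrtInvConj hA]
  constructor <;> intro h <;> linarith

end Matrix

theorem matrix_lagrangian_dual_transform
    {n : ℕ} (Q Γ : Matrix (Fin n) (Fin n) ℂ)
    (hQ : Q.PosSemidef) (hΓ : Γ.PosSemidef) :
    Real.log (1 + Γ).det.re + n - ((1 + Γ) * (1 + Q)⁻¹).trace.re ≤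
      Real.log (1 + Q).det.re ∧
    (Real.log (1 + Γ).det.re + n - ((1 + Γ) * (1 + Q)⁻¹).trace.re =
      Real.log (1 + Q).det.re ↔ Q = Γ) := by
  have hA : (1 + Q).PosDef := PosDef.one.add_posSemidef hQ
  have hB : (1 + Γ).PosDef := PosDef.one.add_posSemidef hΓ
  have hle := hA.log_re_det_add_card_sub_re_trace_mul_inv_le hB
  have heq := hA.log_re_det_add_card_sub_re_trace_mul_inv_eq_iff hB
  rw [Fintype.card_fin] at hle heq
  exact ⟨hle, heq.trans <| add_right_inj 1 |>.trans eq_comm⟩
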